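/- arXiv:2011.08357 — 6 statements merged into one kernel-verified Lean document; each statement's English description precedes it below -/
import Mathlib

section
/- Set D = Σ_{μ ∈ Λ_{d,n}} μ₂. The polynomial det(M_d) ∈ ℤ[x] has degree at most D, and its coefficient of x^D equals det(M_d'). In particular, if det(M_d') ≠ 0, then det(M_d) = det(M_d') · p(x) for a monic polynomial p ∈ ℚ[x] of degree D. -/
/-!
Every entry of row `μ` of `M_d` is a polynomial of degree at most `μ₂` whose coefficient of
`x^{μ₂}` is the corresponding entry of `M_d'`, since `λ_{μ,ν}` is a constant times the `μ₂`-th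
power of a linear polynomial with slope `2ℓ_ν`. Each term of the Leibniz expansion of `det M_d`
takes one entry from every row, so it has degree at most `D = Σ μ₂`, and its coefficient of `x^D`
is the matching term of `det M_d'`. Over `ℚ`, dividing by this nonzero top coefficient leaves a
monic polynomial.
-/

open Finset Polynomial

namespace Capelli

/-- The set `ℙ_{k,n}` of pairs `μ = (μ₁, μ₂)` of nonnegative integers with `μ₁ ≥ μ₂`,
`μ₁ + μ₂ = k` and `μ₂ ≤ n`. -/
def Pkn (n k : ℕ) : Finset (ℕ × ℕ) :=
  (Finset.range (k + 1) ×ˢ Finset.range (k + 1)).filter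
    (fun μ => μ.2 ≤ μ.1 ∧ μ.1 + μ.2 = k ∧ μ.2 ≤ n)

/-- The set `ℙ*_{k,n}` of pairs `ν = (ν₁, ν₂)` of nonnegative integers with `ν₁ ≥ ν₂`,
`ν₁ + ν₂ = k` and `ν₂ ≥ ⌊k/2⌋ - n` (written here additively to avoid truncated subtraction). -/
def PknStar (n k : ℕ) : Finset (ℕ × ℕ) :=
  (Finset.range (k + 1) ×ˢ Finset.range (k + 1)).filter
    (fun ν => ν.2 ≤ ν.1 ∧ ν.1 + ν.2 = k ∧ k / 2 ≤ ν.2 + n)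

/-- `Λ_{d,n} = ⋃_{k=0}^d ℙ_{k,n}`. -/
def Lam (n d : ℕ) : Finset (ℕ × ℕ) := (Finset.range (d + 1)).biUnion (Pkn n)

/-- `Λ*_{d,n} = ⋃_{k=0}^d ℙ*_{k,n}`. -/
def LamStar (n d : ℕ) : Finset (ℕ × ℕ) := (Finset.range (d + 1)).biUnion (PknStar n)

/-- `ℓ_ν = min(ν₁ - ν₂, 2n + 1 - (ν₁ - ν₂))`. -/
def ell (n : ℕ) (ν : ℕ × ℕ) : ℕ := min (ν.1 - ν.2) (2 * n + 1 - (ν.1 - ν.2))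

/-- `Λ_{d,n,j} = {μ ∈ Λ_{d,n} : μ₂ ≥ j}`. -/
def Lamj (n d j : ℕ) : Finset (ℕ × ℕ) := (Lam n d).filter (fun μ => j ≤ μ.2)

/-- `Λ*_{d,n,j} = {ν ∈ Λ*_{d,n} : ν₂ ≤ ⌊|ν|/2⌋ - j}`. -/
def LamStarj (n d j : ℕ) : Finset (ℕ × ℕ) :=
  (LamStar n d).filter (fun ν => ν.2 + j ≤ (ν.1 + ν.2) / 2)

/-- `ν_{(j)} = (|ν| - ⌊|ν|/2⌋ + j, ⌊|ν|/2⌋ - j)`. -/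
def nuSub (ν : ℕ × ℕ) (j : ℕ) : ℕ × ℕ :=
  (ν.1 + ν.2 - (ν.1 + ν.2) / 2 + j, (ν.1 + ν.2) / 2 - j)

/-- The polynomial `λ_{μ,ν}(x) = ((2x+1)ℓ_ν - ℓ_ν²)^{μ₂} (ν₁+ν₂)^{μ₁-μ₂} ∈ ℤ[x]`. -/
noncomputable def lamPoly (n : ℕ) (μ ν : ℕ × ℕ) : Polynomial ℤ :=
  ((2 * X + 1) * C (ell n ν : ℤ) - C ((ell n ν : ℤ) ^ 2)) ^ μ.2 *
    C ((ν.1 + ν.2 : ℕ) : ℤ) ^ (μ.1 - μ.2)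

/-- The row ordering: `μ ⪯ μ'` iff `μ₂ < μ₂'`, or `μ₂ = μ₂'` and `μ₁ ≤ μ₁'`. -/
def rowRel (μ μ' : ℕ × ℕ) : Prop := μ.2 < μ'.2 ∨ (μ.2 = μ'.2 ∧ μ.1 ≤ μ'.1)

/-- The column ordering: `ν ⩽ ν'` iff `⌊(ν₁-ν₂)/2⌋ < ⌊(ν₁'-ν₂')/2⌋`, or these are equal and
`|ν| ≤ |ν'|`.  (A further tie-break by the first coordinate is added so that the relation is
antisymmetric on all of `ℕ × ℕ`; on `Λ*_{d,n}` a tie in the first two comparisons forces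
equality, so this agrees with the ordering of the paper there.) -/
def colRel (ν ν' : ℕ × ℕ) : Prop :=
  (ν.1 - ν.2) / 2 < (ν'.1 - ν'.2) / 2 ∨
    ((ν.1 - ν.2) / 2 = (ν'.1 - ν'.2) / 2 ∧
      (ν.1 + ν.2 < ν'.1 + ν'.2 ∨ (ν.1 + ν.2 = ν'.1 + ν'.2 ∧ ν.1 ≤ ν'.1)))

instance : DecidableRel rowRel := fun a b =>
  inferInstanceAs (Decidable (a.2 < b.2 ∨ (a.2 = b.2 ∧ a.1 ≤ b.1)))

instance : IsTrans (ℕ × ℕ) rowRel := ⟨by intro a b c; unfold rowRel; omega⟩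

instance : IsTotal (ℕ × ℕ) rowRel := ⟨by intro a b; unfold rowRel; omega⟩

instance : IsAntisymm (ℕ × ℕ) rowRel :=
  ⟨by intro a b h1 h2; unfold rowRel at h1 h2; rw [Prod.ext_iff]; omega⟩

instance : DecidableRel colRel := fun a b =>
  inferInstanceAs (Decidable ((a.1 - a.2) / 2 < (b.1 - b.2) / 2 ∨
    ((a.1 - a.2) / 2 = (b.1 - b.2) / 2 ∧
      (a.1 + a.2 < b.1 + b.2 ∨ (a.1 + a.2 = b.1 + b.2 ∧ a.1 ≤ b.1)))))

instance : IsTrans (ℕ × ℕ) colRel := ⟨by intro a b c; unfold colRel; omega⟩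

instance : IsTotal (ℕ × ℕ) colRel := ⟨by intro a b; unfold colRel; omega⟩

instance : IsAntisymm (ℕ × ℕ) colRel :=
  ⟨by intro a b h1 h2; unfold colRel at h1 h2; rw [Prod.ext_iff]; omega⟩

/-- The elements of `Λ_{d,n}` listed in increasing order for `⪯`. -/
def rowList (n d : ℕ) : List (ℕ × ℕ) := (Lam n d).sort rowRel

/-- The elements of `Λ*_{d,n}` listed in increasing order for `⩽`. -/
def colList (n d : ℕ) : List (ℕ × ℕ) := (LamStar n d).sort colRel

/-- The elements of `Λ_{d,n,j}` listed in increasing order for `⪯`. -/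
def rowListJ (n d j : ℕ) : List (ℕ × ℕ) := (Lamj n d j).sort rowRel

/-- The elements of `Λ*_{d,n,j}` listed in increasing order for `⩽`. -/
def colListJ (n d j : ℕ) : List (ℕ × ℕ) := (LamStarj n d j).sort colRel

/-- The matrix `M_d = [λ_{μ,ν}]` with rows indexed by `Λ_{d,n}` (ordered by `⪯`) and columns
indexed by `Λ*_{d,n}` (ordered by `⩽`); since `|Λ_{d,n}| = |Λ*_{d,n}|` the column list has
length `(Lam n d).card` and the `getD` access below always hits an actual entry. -/
noncomputable def Md (n d : ℕ) : Matrix (Fin (Lam n d).card) (Fin (Lam n d).card) (Polynomial ℤ) :=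
  fun i j => lamPoly n ((rowList n d).getD i.val (0, 0)) ((colList n d).getD j.val (0, 0))

/-- The matrix `M_d' = [(2ℓ_ν)^{μ₂}(ν₁+ν₂)^{μ₁-μ₂}]` of leading coefficients. -/
def Md' (n d : ℕ) : Matrix (Fin (Lam n d).card) (Fin (Lam n d).card) ℤ :=
  fun i j =>
    let μ := (rowList n d).getD i.val (0, 0)
    let ν := (colList n d).getD j.val (0, 0)
    (2 * (ell n ν : ℤ)) ^ μ.2 * ((ν.1 + ν.2 : ℕ) : ℤ) ^ (μ.1 - μ.2)

/-- `S_{μ,ν,j}` with `m = μ₂ - j`: the complete homogeneous symmetric polynomial of degree `m`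
evaluated at `ℓ_{ν_{(0)}}, …, ℓ_{ν_{(j-1)}}, ℓ_ν`, i.e. the sum over all `(j+1)`-tuples
`(a₀, …, a_j)` of nonnegative integers with `a₀ + ⋯ + a_j = m` of
`ℓ_{ν_{(0)}}^{a₀} ⋯ ℓ_{ν_{(j-1)}}^{a_{j-1}} ℓ_ν^{a_j}`. -/
def Shs (n : ℕ) (ν : ℕ × ℕ) (j m : ℕ) : ℕ :=
  ∑ a ∈ Finset.Nat.antidiagonalTuple (j + 1) m,
    ∏ i : Fin (j + 1), (if (i : ℕ) < j then ell n (nuSub ν (i : ℕ)) else ell n ν) ^ a i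

/-- The matrix `N_j = [2^{μ₂-j}(ν₁+ν₂)^{μ₁-μ₂} S_{μ,ν,j}]` with rows indexed by `Λ_{d,n,j}`
(ordered by `⪯`) and columns indexed by `Λ*_{d,n,j}` (ordered by `⩽`). -/
def Ndj (n d j : ℕ) : Matrix (Fin (Lamj n d j).card) (Fin (Lamj n d j).card) ℤ :=
  fun i i' =>
    let μ := (rowListJ n d j).getD i.val (0, 0)
    let ν := (colListJ n d j).getD i'.val (0, 0)
    2 ^ (μ.2 - j) * ((ν.1 + ν.2 : ℕ) : ℤ) ^ (μ.1 - μ.2) * (Shs n ν j (μ.2 - j) : ℤ)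

/-- The Vandermonde matrix `V(a, a+1, …, a+s-1) = [(a+j)^{i-1}]_{1 ≤ i,j ≤ s}` (0-indexed
as `[(a+j)^i]_{0 ≤ i,j ≤ s-1}`), with the convention `0⁰ = 1`. -/
def vandInt (a s : ℕ) : Matrix (Fin s) (Fin s) ℤ :=
  fun i j => ((a + (j : ℕ) : ℕ) : ℤ) ^ (i : ℕ)

/-- `f(d,s) = #{(ν,ν') ∈ Λ*_{d,n} × Λ*_{d,n} : |ν| = |ν'|, ℓ_{ν'} < ℓ_ν, ℓ_ν + ℓ_{ν'} - 1 = s}`. -/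
def fds (n d : ℕ) (s : ℤ) : ℕ :=
  (((LamStar n d) ×ˢ (LamStar n d)).filter
    (fun p => p.1.1 + p.1.2 = p.2.1 + p.2.2 ∧ ell n p.2 < ell n p.1 ∧
      (ell n p.1 : ℤ) + (ell n p.2 : ℤ) - 1 = s)).card

/-- `g_k(s) = #{(ν,ν') ∈ ℙ*_{k,n} × ℙ*_{k,n} : ℓ_{ν'} < ℓ_ν, ℓ_ν + ℓ_{ν'} - 1 = s}`. -/
def gks (n k : ℕ) (s : ℤ) : ℕ :=
  ((PknStar n k ×ˢ PknStar n k).filter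
    (fun p => ell n p.2 < ell n p.1 ∧ (ell n p.1 : ℤ) + (ell n p.2 : ℤ) - 1 = s)).card

end Capelli

namespace Finset

variable {α M : Type*} [AddCommMonoid M]

theorem sum_getD_sort (r : α → α → Prop) [DecidableRel r] [IsTrans α r] [Std.Antisymm r]
    [Std.Total r] (s : Finset α) (f : α → M) (d : α) :
    ∑ i : Fin #s, f ((s.sort r).getD i d) = ∑ x ∈ s, f x := by
  calc ∑ i : Fin #s, f ((s.sort r).getD i d)
      = ∑ i : Fin (s.sort r).length, f (s.sort r)[i.1] :=
        (Fin.sum_congr' (fun i => f ((s.sort r).getD i d)) (length_sort r)).symm.trans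
          (Fintype.sum_congr _ _ fun i => congrArg f (List.getD_eq_getElem _ _ i.2))
    _ = ((s.sort r).map f).sum := Fin.sum_univ_fun_getElem _ f
    _ = ∑ x ∈ s, f x := by rw [← Multiset.sum_coe, ← Multiset.map_coe, sort_eq]; rfl

end Finset

namespace Polynomial

variable {R : Type*}

theorem coeff_prod_sum_of_natDegree_le [CommSemiring R] {ι : Type*} (s : Finset ι)
    (f : ι → R[X]) (w : ι → ℕ) (h : ∀ i ∈ s, (f i).natDegree ≤ w i) :
    (∏ i ∈ s, f i).coeff (∑ i ∈ s, w i) = ∏ i ∈ s, (f i).coeff (w i) := by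
  induction s using Finset.cons_induction with
  | empty => simp
  | cons a s _ ih =>
    have hs : ∀ i ∈ s, (f i).natDegree ≤ w i := fun i hi => h i (mem_cons_of_mem hi)
    rw [prod_cons, sum_cons, prod_cons,
      coeff_mul_add_eq_of_natDegree_le (h a (mem_cons_self a s))
        ((natDegree_prod_le _ _).trans (sum_le_sum hs)), ih hs]

theorem natDegree_pow_mul_C_le [Semiring R] {f : R[X]} (hf : f.natDegree ≤ 1) (m : ℕ) (c : R) :
    (f ^ m * C c).natDegree ≤ m :=
  (natDegree_mul_C_le _ _).trans (natDegree_pow_le_of_le m hf |>.trans (mul_one m).le)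

theorem coeff_pow_mul_C [CommSemiring R] {f : R[X]} (hf : f.natDegree ≤ 1) (m : ℕ) (c : R) :
    (f ^ m * C c).coeff m = f.coeff 1 ^ m * c := by
  rw [coeff_mul_C, ← coeff_pow_of_natDegree_le hf, mul_one]

theorem exists_monic_eq_C_mul_of_natDegree_le {K : Type*} [Field K] {P : K[X]} {D : ℕ}
    (hP : P.natDegree ≤ D) (hc : P.coeff D ≠ 0) :
    ∃ p : K[X], p.Monic ∧ p.natDegree = D ∧ P = C (P.coeff D) * p := by
  have hdeg : P.natDegree = D := natDegree_eq_of_le_of_coeff_ne_zero hP hc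
  refine ⟨C (P.coeff D)⁻¹ * P, ?_, ?_, ?_⟩
  · exact monic_C_mul_of_mul_leadingCoeff_eq_one (by rw [leadingCoeff, hdeg, inv_mul_cancel₀ hc])
  · rw [natDegree_C_mul (inv_ne_zero hc), hdeg]
  · rw [← mul_assoc, ← C_mul, mul_inv_cancel₀ hc, C_1, one_mul]

end Polynomial

namespace Matrix

variable {ι R : Type*} [Fintype ι] [DecidableEq ι] [CommRing R]

theorem natDegree_det_le_sum_of_row (M : Matrix ι ι R[X]) (w : ι → ℕ)
    (h : ∀ i j, (M i j).natDegree ≤ w i) : M.det.natDegree ≤ ∑ i, w i := by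
  rw [det_apply]
  refine natDegree_sum_le_of_forall_le _ _ fun σ _ => (natDegree_smul_le _ _).trans ?_
  calc (∏ i, M (σ i) i).natDegree ≤ ∑ i, (M (σ i) i).natDegree := natDegree_prod_le _ _
    _ ≤ ∑ i, w (σ i) := sum_le_sum fun i _ => h _ _
    _ = ∑ i, w i := Equiv.sum_comp σ w

theorem coeff_det_sum_of_row (M : Matrix ι ι R[X]) (w : ι → ℕ)
    (h : ∀ i j, (M i j).natDegree ≤ w i) :
    M.det.coeff (∑ i, w i) = (of fun i j => (M i j).coeff (w i)).det := by
  rw [det_apply, det_apply, finsetSum_coeff]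
  refine sum_congr rfl fun σ _ => ?_
  rw [coeff_smul, ← Equiv.sum_comp σ w,
    coeff_prod_sum_of_natDegree_le _ _ _ fun i _ => h _ _]
  rfl

end Matrix

namespace Capelli

theorem natDegree_lamPoly_le (n : ℕ) (μ ν : ℕ × ℕ) : (lamPoly n μ ν).natDegree ≤ μ.2 := by
  rw [lamPoly, ← C_pow]
  exact natDegree_pow_mul_C_le (by compute_degree) _ _

theorem coeff_lamPoly (n : ℕ) (μ ν : ℕ × ℕ) :
    (lamPoly n μ ν).coeff μ.2 =
      (2 * (ell n ν : ℤ)) ^ μ.2 * ((ν.1 + ν.2 : ℕ) : ℤ) ^ (μ.1 - μ.2) := by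
  rw [lamPoly, ← C_pow, coeff_pow_mul_C (by compute_degree)]
  congr 2
  rw [coeff_sub, coeff_mul_C, coeff_C]
  simp [coeff_X, coeff_one, mul_comm]

/-- Set `D = Σ_{μ ∈ Λ_{d,n}} μ₂`.  The polynomial `det(M_d) ∈ ℤ[x]` has degree at
most `D`, and its coefficient of `x^D` equals `det(M_d')`.  In particular, if `det(M_d') ≠ 0`,
then `det(M_d) = det(M_d') · p(x)` for a monic polynomial `p ∈ ℚ[x]` of degree `D`. -/
theorem det_Md_leading (n d : ℕ) :
    (Md n d).det.degree ≤ (∑ μ ∈ Lam n d, μ.2 : ℕ) ∧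
    (Md n d).det.coeff (∑ μ ∈ Lam n d, μ.2) = (Md' n d).det ∧
    ((Md' n d).det ≠ 0 → ∃ p : Polynomial ℚ, p.Monic ∧ p.natDegree = ∑ μ ∈ Lam n d, μ.2 ∧
      (Md n d).det.map (Int.castRingHom ℚ) = C ((Md' n d).det : ℚ) * p) := by
  have hrows : ∑ i : Fin #(Lam n d), ((rowList n d).getD i (0, 0)).2 = ∑ μ ∈ Lam n d, μ.2 :=
    sum_getD_sort rowRel _ Prod.snd _
  have hentry : ∀ i j, (Md n d i j).natDegree ≤ ((rowList n d).getD i (0, 0)).2 :=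
    fun i j => natDegree_lamPoly_le n _ _
  have hdeg : (Md n d).det.natDegree ≤ ∑ μ ∈ Lam n d, μ.2 :=
    hrows ▸ Matrix.natDegree_det_le_sum_of_row _ _ hentry
  have hcoeff : (Md n d).det.coeff (∑ μ ∈ Lam n d, μ.2) = (Md' n d).det := by
    rw [← hrows, Matrix.coeff_det_sum_of_row _ _ hentry]
    exact congrArg Matrix.det (Matrix.ext fun i j => coeff_lamPoly n _ _)
  refine ⟨natDegree_le_iff_degree_le.mp hdeg, hcoeff, fun hne => ?_⟩
  have hcoeffℚ : ((Md n d).det.map (Int.castRingHom ℚ)).coeff (∑ μ ∈ Lam n d, μ.2) =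
      ((Md' n d).det : ℚ) := by
    rw [coeff_map, hcoeff, eq_intCast]
  rw [← hcoeffℚ]
  exact exists_monic_eq_C_mul_of_natDegree_le (natDegree_map_le.trans hdeg)
    (hcoeffℚ ▸ Int.cast_ne_zero.mpr hne)

end Capelli
end

section
/- Set m = min(⌊d/2⌋, n). Then det(M_d') = det(V(2m, 2m+1, …, d)) · ∏_{j=0}^{m−1} ( det(V(2j, 2j+1, …, d)) · ∏_{ν ∈ Λ*_{d,n,j+1}} 2(ℓ_ν − ℓ_{ν_{(j)}}) ). -/
/-!
The map `rowToCol : μ ↦ (|μ| - ⌊|μ|/2⌋ + μ₂, ⌊|μ|/2⌋ - μ₂)` is an order isomorphism from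
`(Λ_{d,n}, ⪯)` onto `(Λ*_{d,n}, ⩽)`, so `M_d'` is a square matrix indexed by `Λ_{d,n}`.
Writing `(2ℓ_ν)^{μ₂} = 2^{μ₂} h_{μ₂}(ℓ_ν)`, with `h` the complete homogeneous symmetric
polynomial, consider the matrices `N_j` with entries
`2^{μ₂-j} |ν|^{μ₁-μ₂} h_{μ₂-j}(ℓ_ν, ℓ_{ν_{(j-1)}}, …, ℓ_{ν_{(0)}})`, `μ₂ ≥ j`.
In `N_j`, subtract from every column `ν ∈ Λ*_{d,n,j+1}` the column `ν_{(j)}`, which has the same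
size `|ν|`. The rows with `μ₂ = j` only see `|ν|`, so they now vanish off the columns `ν_{(j)}`,
where they form `V(2j, …, d)`; and `h_{m+1}(x, L) - h_{m+1}(y, L) = (x - y) h_m(x, y, L)` turns
the complementary block into `N_{j+1}` with its column `ν` scaled by `2(ℓ_ν - ℓ_{ν_{(j)}})`.
Block triangularity gives `det N_j = det V(2j, …, d) · ∏ 2(ℓ_ν - ℓ_{ν_{(j)}}) · det N_{j+1}`,
and `N_j` is empty for `j > min(⌊d/2⌋, n)`.
-/

open Finset Polynomial

section CompleteHomog

variable {R : Type*} [CommRing R]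

def completeHomog : List R → ℕ → R
  | _, 0 => 1
  | [], _ + 1 => 0
  | x :: l, m + 1 => completeHomog l (m + 1) + x * completeHomog (x :: l) m

lemma completeHomog_singleton (x : R) (m : ℕ) : completeHomog [x] m = x ^ m := by
  induction m with
  | zero => rw [completeHomog.eq_1, pow_zero]
  | succ m ih => rw [completeHomog.eq_3, ih, completeHomog.eq_2, zero_add, pow_succ']

lemma completeHomog_cons_sub (x y : R) (l : List R) (m : ℕ) :
    completeHomog (x :: l) (m + 1) - completeHomog (y :: l) (m + 1) =
      (x - y) * completeHomog (x :: y :: l) m := by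
  induction m with
  | zero => simp only [completeHomog]; ring
  | succ m ih =>
    rw [completeHomog.eq_3, completeHomog.eq_3 y, completeHomog.eq_3 x (y :: l)]
    linear_combination x * ih

end CompleteHomog

namespace Matrix

variable {ι α R : Type*} [Fintype ι] [DecidableEq ι] [CommRing R]

lemma det_of_sub_cols (A : Matrix ι ι R) (q : ι → Prop) [DecidablePred q] (τ : ι → ι)
    (hτ : ∀ c, ¬ q (τ c)) :
    (of fun r c => if q c then A r c - A r (τ c) else A r c).det = A.det := by
  -- The column operations are right multiplication by `U`, unitriangular for the blocks of `q`.
  let U : Matrix ι ι R := 1 - of fun a c => if q c ∧ a = τ c then 1 else 0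
  have hU_block : ∀ (p : ι → Prop) [DecidablePred p], (∀ a c, p a → p c → (q a ↔ q c)) →
      U.toSquareBlockProp p = 1 := by
    intro p _ hp
    ext a c
    have : ¬ (q c ∧ a.1 = τ c) := fun h => hτ c (h.2 ▸ (hp _ _ a.2 c.2).mpr h.1)
    simp [U, toSquareBlockProp_def, this, one_apply, Subtype.ext_iff]
  have hU_det : U.det = 1 := by
    rw [twoBlockTriangular_det' U q, hU_block q fun _ _ ha hc => iff_of_true ha hc,
      hU_block _ fun _ _ ha hc => iff_of_false ha hc, det_one, det_one, mul_one]
    intro a ha c hc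
    have hac : a ≠ c := fun h => hc (h ▸ ha)
    simp [U, hac, hc]
  calc (of fun r c => if q c then A r c - A r (τ c) else A r c).det = (A * U).det := by
        congr 1
        ext r c
        by_cases hc : q c <;> simp [U, mul_apply, one_apply, _root_.mul_sub, sum_sub_distrib, hc]
    _ = A.det := by rw [det_mul, hU_det, mul_one]

lemma det_of_getD_sort [DecidableEq α] (s : Finset α) (r : α → α → Prop) [DecidableRel r]
    [IsTrans α r] [Std.Antisymm r] [Std.Total r] (x : α) (f : α → α → R) :
    (of fun i j : Fin s.card => f ((s.sort r).getD i x) ((s.sort r).getD j x)).det =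
      (of fun a b : s => f a b).det := by
  let e : Fin s.card ≃ s := (finCongr (s.length_sort r)).symm.trans
    (((s.sort_nodup r).getEquiv _).trans (Equiv.subtypeEquivRight fun _ => s.mem_sort r))
  have he : ∀ i, (e i : α) = (s.sort r).getD i x := fun i => by simp [e]
  rw [← det_submatrix_equiv_self e]
  congr 1
  ext i j
  simp [he]

end Matrix

namespace Capelli

lemma mem_Lam {n d : ℕ} {μ : ℕ × ℕ} :
    μ ∈ Lam n d ↔ μ.2 ≤ μ.1 ∧ μ.1 + μ.2 ≤ d ∧ μ.2 ≤ n := by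
  simp only [Lam, Pkn, mem_biUnion, mem_filter, mem_range, mem_product]
  constructor
  · rintro ⟨k, hk, -, h₁, h₂, h₃⟩
    omega
  · intro h
    exact ⟨μ.1 + μ.2, by omega, ⟨by omega, by omega⟩, h.1, rfl, h.2.2⟩

lemma mem_LamStar {n d : ℕ} {ν : ℕ × ℕ} :
    ν ∈ LamStar n d ↔ ν.2 ≤ ν.1 ∧ ν.1 + ν.2 ≤ d ∧ (ν.1 + ν.2) / 2 ≤ ν.2 + n := by
  simp only [LamStar, PknStar, mem_biUnion, mem_filter, mem_range, mem_product]
  constructor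
  · rintro ⟨k, hk, -, h₁, h₂, h₃⟩
    omega
  · intro h
    exact ⟨ν.1 + ν.2, by omega, ⟨by omega, by omega⟩, h.1, rfl, h.2.2⟩

lemma mem_Lamj {n d j : ℕ} {μ : ℕ × ℕ} :
    μ ∈ Lamj n d j ↔ μ.2 ≤ μ.1 ∧ μ.1 + μ.2 ≤ d ∧ μ.2 ≤ n ∧ j ≤ μ.2 := by
  rw [Lamj, mem_filter, mem_Lam, and_assoc, and_assoc]

lemma mem_LamStarj {n d j : ℕ} {ν : ℕ × ℕ} :
    ν ∈ LamStarj n d j ↔ ν.2 ≤ ν.1 ∧ ν.1 + ν.2 ≤ d ∧ (ν.1 + ν.2) / 2 ≤ ν.2 + n ∧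
      ν.2 + j ≤ (ν.1 + ν.2) / 2 := by
  rw [LamStarj, mem_filter, mem_LamStar, and_assoc, and_assoc]

lemma Lamj_zero (n d : ℕ) : Lamj n d 0 = Lam n d :=
  filter_true_of_mem fun _ _ => Nat.zero_le _

lemma LamStarj_zero (n d : ℕ) : LamStarj n d 0 = LamStar n d :=
  filter_true_of_mem fun _ hν => by rw [mem_LamStar] at hν; omega

lemma LamStarj_eq_empty (n d : ℕ) : LamStarj n d (min (d / 2) n + 1) = ∅ :=
  filter_false_of_mem fun _ hν => by rw [mem_LamStar] at hν; omega

lemma nuSub_congr {ν ν' : ℕ × ℕ} (h : ν.1 + ν.2 = ν'.1 + ν'.2) (j : ℕ) :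
    nuSub ν j = nuSub ν' j := by
  simp only [nuSub, h]

lemma nuSub_add {ν : ℕ × ℕ} {j : ℕ} (hj : j ≤ (ν.1 + ν.2) / 2) :
    (nuSub ν j).1 + (nuSub ν j).2 = ν.1 + ν.2 := by
  simp only [nuSub]; omega

def rowToCol (μ : ℕ × ℕ) : ℕ × ℕ := nuSub μ μ.2

lemma rowToCol_add {μ : ℕ × ℕ} (h : μ.2 ≤ μ.1) :
    (rowToCol μ).1 + (rowToCol μ).2 = μ.1 + μ.2 :=
  nuSub_add (by omega)

lemma injOn_rowToCol_Lamj (n d j : ℕ) : Set.InjOn rowToCol (Lamj n d j : Set (ℕ × ℕ)) := by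
  intro μ hμ μ' hμ' h
  have := mem_Lamj.mp hμ
  have := mem_Lamj.mp hμ'
  simp only [rowToCol, nuSub, Prod.ext_iff] at h ⊢
  omega

lemma image_rowToCol_Lamj (n d j : ℕ) : (Lamj n d j).image rowToCol = LamStarj n d j := by
  ext ν
  simp only [mem_image, mem_Lamj, mem_LamStarj, rowToCol, nuSub]
  constructor
  · rintro ⟨μ, hμ, rfl⟩
    omega
  · intro hν
    refine ⟨(ν.1 + ν.2 - (ν.1 - ν.2) / 2, (ν.1 - ν.2) / 2), by omega, ?_⟩
    ext <;> simp only <;> omega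

lemma colList_eq_map_rowList (n d : ℕ) : colList n d = (rowList n d).map rowToCol := by
  rw [rowList, colList, ← LamStarj_zero, ← image_rowToCol_Lamj, sort, sort,
    image_val_of_injOn (injOn_rowToCol_Lamj n d 0), Lamj_zero,
    Multiset.map_sort rowToCol _ rowRel colRel]
  intro μ hμ μ' hμ'
  have h := (mem_Lam.mp hμ).1
  have h' := (mem_Lam.mp hμ').1
  simp only [rowRel, colRel, rowToCol, nuSub]
  omega

lemma prod_LamStarj {M : Type*} [CommMonoid M] (n d j : ℕ) (g : ℕ × ℕ → M) :
    ∏ ν ∈ LamStarj n d j, g ν = ∏ μ : Lamj n d j, g (rowToCol μ) := by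
  rw [← image_rowToCol_Lamj, prod_image (injOn_rowToCol_Lamj n d j),
    ← prod_coe_sort (Lamj n d j)]

def ellNodes (n : ℕ) (ν : ℕ × ℕ) : ℕ → List ℤ
  | 0 => []
  | j + 1 => (ell n (nuSub ν j) : ℤ) :: ellNodes n ν j

lemma ellNodes_congr {ν ν' : ℕ × ℕ} (h : ν.1 + ν.2 = ν'.1 + ν'.2) (n j : ℕ) :
    ellNodes n ν j = ellNodes n ν' j := by
  induction j with
  | zero => rfl
  | succ j ih => rw [ellNodes, ellNodes, ih, nuSub_congr h]

/-- The entry of the paper's `N_j` (`Ndj`) in row `μ` and column `ν`: `completeHomog` in the nodes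
`ℓ_ν, ℓ_{ν_{(j-1)}}, …, ℓ_{ν_{(0)}}` is `S_{μ,ν,j}` (`Shs`). -/
def reducedEntry (n j : ℕ) (μ ν : ℕ × ℕ) : ℤ :=
  2 ^ (μ.2 - j) * ((ν.1 + ν.2 : ℕ) : ℤ) ^ (μ.1 - μ.2) *
    completeHomog ((ell n ν : ℤ) :: ellNodes n ν j) (μ.2 - j)

lemma reducedEntry_zero (n : ℕ) (μ ν : ℕ × ℕ) :
    reducedEntry n 0 μ ν = (2 * (ell n ν : ℤ)) ^ μ.2 * ((ν.1 + ν.2 : ℕ) : ℤ) ^ (μ.1 - μ.2) := by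
  rw [reducedEntry, ellNodes, completeHomog_singleton, Nat.sub_zero]
  ring

lemma reducedEntry_of_snd_eq {n j : ℕ} {μ : ℕ × ℕ} (h : μ.2 = j) (ν : ℕ × ℕ) :
    reducedEntry n j μ ν = ((ν.1 + ν.2 : ℕ) : ℤ) ^ (μ.1 - j) := by
  rw [reducedEntry, h, Nat.sub_self, pow_zero, one_mul, completeHomog.eq_1, mul_one]

lemma reducedEntry_sub_nuSub {n j : ℕ} {μ ν : ℕ × ℕ} (hμ : j < μ.2)
    (hν : j ≤ (ν.1 + ν.2) / 2) :
    reducedEntry n j μ ν - reducedEntry n j μ (nuSub ν j) =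
      2 * ((ell n ν : ℤ) - (ell n (nuSub ν j) : ℤ)) * reducedEntry n (j + 1) μ ν := by
  obtain ⟨m, hm⟩ : ∃ m, μ.2 - j = m + 1 := ⟨μ.2 - (j + 1), by omega⟩
  have hm' : μ.2 - (j + 1) = m := by omega
  rw [reducedEntry, reducedEntry, reducedEntry, nuSub_add hν, ellNodes_congr (nuSub_add hν),
    ellNodes, hm, hm', pow_succ]
  linear_combination (2 ^ m * 2 * ((ν.1 + ν.2 : ℕ) : ℤ) ^ (μ.1 - μ.2)) *
    completeHomog_cons_sub (ell n ν : ℤ) (ell n (nuSub ν j)) (ellNodes n ν j) m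

def reducedMatrix (n d j : ℕ) : Matrix (Lamj n d j) (Lamj n d j) ℤ :=
  Matrix.of fun μ μ' => reducedEntry n j μ (rowToCol μ')

lemma det_Md'_eq_det_reducedMatrix (n d : ℕ) : (Md' n d).det = (reducedMatrix n d 0).det := by
  have hM : Md' n d = Matrix.of fun i j : Fin (Lam n d).card =>
      reducedEntry n 0 ((rowList n d).getD i (0, 0)) (rowToCol ((rowList n d).getD j (0, 0))) := by
    ext i j
    have hcol : (colList n d).getD j (0, 0) = rowToCol ((rowList n d).getD j (0, 0)) := by
      rw [colList_eq_map_rowList]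
      exact List.getD_map (rowList n d) (0, 0) rowToCol
    rw [Matrix.of_apply, reducedEntry_zero, ← hcol]
    rfl
  rw [hM, rowList, Matrix.det_of_getD_sort (Lam n d) rowRel (0, 0)
    (fun μ μ' => reducedEntry n 0 μ (rowToCol μ')), reducedMatrix, Lamj_zero]

lemma mem_Lamj_succ_iff {n d j : ℕ} {μ : ℕ × ℕ} (hμ : μ ∈ Lamj n d j) :
    μ ∈ Lamj n d (j + 1) ↔ j < μ.2 := by
  rw [mem_Lamj] at hμ ⊢
  omega

def rowNuSub {n d j : ℕ} (c : Lamj n d j) : Lamj n d j :=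
  ⟨(c.1.1 + c.1.2 - j, j), by have := mem_Lamj.mp c.2; rw [mem_Lamj]; omega⟩

lemma rowNuSub_not_mem {n d j : ℕ} (c : Lamj n d j) : (rowNuSub c).1 ∉ Lamj n d (j + 1) := by
  rw [mem_Lamj_succ_iff (rowNuSub c).2]
  exact lt_irrefl j

lemma rowToCol_rowNuSub {n d j : ℕ} (c : Lamj n d j) :
    rowToCol (rowNuSub c) = nuSub (rowToCol c) j := by
  have := mem_Lamj.mp c.2
  exact nuSub_congr (by rw [rowToCol_add this.1]; simp only [rowNuSub]; omega) j

lemma le_half_rowToCol {n d j : ℕ} (c : Lamj n d j) :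
    j ≤ ((rowToCol c).1 + (rowToCol c).2) / 2 := by
  have := mem_Lamj.mp c.2
  rw [rowToCol_add this.1]
  omega

def reducedColOp (n d j : ℕ) : Matrix (Lamj n d j) (Lamj n d j) ℤ :=
  Matrix.of fun r c => if c.1 ∈ Lamj n d (j + 1)
    then reducedMatrix n d j r c - reducedMatrix n d j r (rowNuSub c) else reducedMatrix n d j r c

lemma det_reducedColOp (n d j : ℕ) : (reducedColOp n d j).det = (reducedMatrix n d j).det :=
  Matrix.det_of_sub_cols _ _ _ rowNuSub_not_mem

lemma reducedColOp_eq_zero {n d j : ℕ} {r c : Lamj n d j} (hr : r.1 ∉ Lamj n d (j + 1))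
    (hc : c.1 ∈ Lamj n d (j + 1)) : reducedColOp n d j r c = 0 := by
  have hr₂ : r.1.2 = j := by
    have := mem_Lamj.mp r.2
    rw [mem_Lamj_succ_iff r.2] at hr
    omega
  simp only [reducedColOp, reducedMatrix, Matrix.of_apply, if_pos hc, reducedEntry_of_snd_eq hr₂,
    rowToCol_rowNuSub, nuSub_add (le_half_rowToCol c), sub_self]

lemma det_reducedColOp_block_not_mem {n d j : ℕ} (hj : j ≤ min (d / 2) n) :
    ((reducedColOp n d j).toSquareBlockProp fun μ => μ.1 ∉ Lamj n d (j + 1)).det =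
      (vandInt (2 * j) (d - 2 * j + 1)).det := by
  have hsnd : ∀ μ : {μ : Lamj n d j // μ.1 ∉ Lamj n d (j + 1)}, μ.1.1.2 = j := fun μ => by
    have := mem_Lamj.mp μ.1.2
    have := (mem_Lamj_succ_iff μ.1.2).not.mp μ.2
    omega
  let e : {μ : Lamj n d j // μ.1 ∉ Lamj n d (j + 1)} ≃ Fin (d - 2 * j + 1) :=
    { toFun := fun μ => ⟨μ.1.1.1 - j, by have := mem_Lamj.mp μ.1.2; omega⟩
      invFun := fun i => ⟨⟨(j + i, j), by rw [mem_Lamj]; omega⟩,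
        show (j + (i : ℕ), j) ∉ Lamj n d (j + 1) by rw [mem_Lamj]; omega⟩
      left_inv := fun μ => by
        have := mem_Lamj.mp μ.1.2
        have := hsnd μ
        ext <;> simp only <;> omega
      right_inv := fun i => by ext; simp }
  rw [← Matrix.det_submatrix_equiv_self e.symm]
  congr 1
  ext r c
  simp only [Matrix.submatrix_apply, Matrix.toSquareBlockProp, Matrix.toBlock_apply, reducedColOp,
    Matrix.of_apply, if_neg (e.symm c).2, reducedMatrix, reducedEntry_of_snd_eq (hsnd _)]
  change (((rowToCol (j + c, j)).1 + (rowToCol (j + c, j)).2 : ℕ) : ℤ) ^ (j + (r : ℕ) - j) =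
    ((2 * j + c : ℕ) : ℤ) ^ (r : ℕ)
  rw [rowToCol_add (by omega)]
  congr 2 <;> omega

lemma det_reducedColOp_block_mem (n d j : ℕ) :
    ((reducedColOp n d j).toSquareBlockProp fun μ => μ.1 ∈ Lamj n d (j + 1)).det =
      (∏ ν ∈ LamStarj n d (j + 1), 2 * ((ell n ν : ℤ) - (ell n (nuSub ν j) : ℤ))) *
        (reducedMatrix n d (j + 1)).det := by
  let e : {μ : Lamj n d j // μ.1 ∈ Lamj n d (j + 1)} ≃ Lamj n d (j + 1) :=
    Equiv.subtypeSubtypeEquivSubtype (p := (· ∈ Lamj n d j)) (q := (· ∈ Lamj n d (j + 1)))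
      fun h => by rw [mem_Lamj] at h ⊢; omega
  rw [prod_LamStarj, ← Matrix.det_mul_row, ← Matrix.det_submatrix_equiv_self e]
  congr 1
  ext r c
  simp only [Matrix.toSquareBlockProp, Matrix.toBlock_apply, reducedColOp, Matrix.of_apply,
    if_pos c.2, reducedMatrix, rowToCol_rowNuSub, Matrix.submatrix_apply]
  exact reducedEntry_sub_nuSub ((mem_Lamj_succ_iff r.1.2).mp r.2) (le_half_rowToCol c.1)

lemma det_reducedMatrix_eq_mul {n d j : ℕ} (hj : j ≤ min (d / 2) n) :
    (reducedMatrix n d j).det = ((vandInt (2 * j) (d - 2 * j + 1)).det *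
      ∏ ν ∈ LamStarj n d (j + 1), 2 * ((ell n ν : ℤ) - (ell n (nuSub ν j) : ℤ))) *
      (reducedMatrix n d (j + 1)).det := by
  rw [← det_reducedColOp, Matrix.twoBlockTriangular_det _ (fun μ => μ.1 ∈ Lamj n d (j + 1))
    fun _ hr _ hc => reducedColOp_eq_zero hr hc, det_reducedColOp_block_mem,
    det_reducedColOp_block_not_mem hj]
  ring

lemma det_reducedMatrix (n d j : ℕ) :
    (reducedMatrix n d j).det = ∏ i ∈ Ico j (min (d / 2) n + 1),
      ((vandInt (2 * i) (d - 2 * i + 1)).det *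
        ∏ ν ∈ LamStarj n d (i + 1), 2 * ((ell n ν : ℤ) - (ell n (nuSub ν i) : ℤ))) := by
  induction h : min (d / 2) n + 1 - j generalizing j with
  | zero =>
    have : IsEmpty (Lamj n d j) := ⟨fun μ => by have := mem_Lamj.mp μ.2; omega⟩
    rw [Matrix.det_isEmpty, Ico_eq_empty_of_le (by omega), prod_empty]
  | succ t ih =>
    rw [prod_eq_prod_Ico_succ_bot (show j < min (d / 2) n + 1 by omega),
      det_reducedMatrix_eq_mul (show j ≤ min (d / 2) n by omega), ih (j + 1) (by omega)]

/-- Set `m = min(⌊d/2⌋, n)`.  Then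
`det(M_d') = det(V(2m, 2m+1, …, d)) ·
  ∏_{j=0}^{m-1} ( det(V(2j, 2j+1, …, d)) · ∏_{ν ∈ Λ*_{d,n,j+1}} 2(ℓ_ν - ℓ_{ν_{(j)}}) )`. -/
theorem det_Md' (n d : ℕ) :
    (Md' n d).det =
      (vandInt (2 * min (d / 2) n) (d - 2 * min (d / 2) n + 1)).det *
        ∏ j ∈ Finset.range (min (d / 2) n),
          ((vandInt (2 * j) (d - 2 * j + 1)).det *
            ∏ ν ∈ LamStarj n d (j + 1), 2 * ((ell n ν : ℤ) - (ell n (nuSub ν j) : ℤ))) := by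
  rw [det_Md'_eq_det_reducedMatrix, det_reducedMatrix, ← range_eq_Ico, prod_range_succ,
    LamStarj_eq_empty, prod_empty, mul_one, mul_comm]

end Capelli
end

section
/- For all nonnegative integers n and d, det(M_d') ≠ 0. -/
open Finset Polynomial

namespace Capelli

lemma mem_PknStar {n k : ℕ} {ν : ℕ × ℕ} :
    ν ∈ PknStar n k ↔ ν.2 ≤ ν.1 ∧ ν.1 + ν.2 = k ∧ k / 2 ≤ ν.2 + n := by
  simp only [PknStar, mem_filter, mem_product, mem_range]
  omega

lemma card_PknStar (n k : ℕ) : #(PknStar n k) = min (k / 2) n + 1 := by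
  have : PknStar n k = (Icc (k / 2 - n) (k / 2)).image fun t => (k - t, t) := by
    ext ν
    simp only [mem_PknStar, mem_image, mem_Icc, Prod.ext_iff]
    exact ⟨fun h => ⟨ν.2, by omega⟩, fun ⟨t, h⟩ => by omega⟩
  rw [this, card_image_of_injective _ fun _ _ h => congr_arg Prod.snd h, Nat.card_Icc]
  omega

-- `ν ↦ nuSub ν ν.2` keeps `|ν|` and replaces `ν₂` by `⌊|ν|/2⌋ - ν₂`: an involution exchanging
-- `Λ_{d,n}` and `Λ*_{d,n}`.
lemma card_LamStar_eq_card_Lam (n d : ℕ) : #(LamStar n d) = #(Lam n d) := by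
  refine card_bij' (fun ν _ => nuSub ν ν.2) (fun μ _ => nuSub μ μ.2) ?_ ?_ ?_ ?_ <;>
    intro ν hν <;>
    simp only [mem_Lam, mem_LamStar, nuSub, Prod.ext_iff] at hν ⊢ <;>
    omega

-- On `ℙ*_{k,n}`, `δ = ν₁ - ν₂ ≤ 2n + 1` has the parity of `k`, and `2n + 1 - δ` the other one.
lemma ell_injOn_PknStar (n k : ℕ) : Set.InjOn (ell n) (PknStar n k) := by
  intro ν hν ν' hν' h
  rw [mem_coe, mem_PknStar] at hν hν'
  unfold ell at h
  rw [Prod.ext_iff]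
  omega

section

variable {R : Type*} [CommRing R]

lemma C_X_sub_C_dvd_of_map_evalRingHom_eq_zero {c : R} {p : R[X][X]}
    (h : p.map (evalRingHom c) = 0) : C (X - C c) ∣ p :=
  (C_dvd_iff_dvd_coeff _ _).2 fun i => dvd_iff_isRoot.2 <| by
    simpa using congr_arg (coeff · i) h

/-- The coefficient of `x^a y^j` in `p : R[X][Y]` is `(p.coeff j).coeff a`, so `SupportedIn n d p`
says that `p` is a combination of the monomials `x^{μ₁-μ₂} y^{μ₂}`, `μ ∈ Λ_{d,n}`. -/
def SupportedIn (n d : ℕ) (p : R[X][X]) : Prop :=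
  ∀ j a, (p.coeff j).coeff a ≠ 0 → (j + a, j) ∈ Lam n d

variable {n d : ℕ} {p : R[X][X]}

lemma SupportedIn.natDegree_le (hp : SupportedIn n d p) : p.natDegree ≤ min (d / 2) n := by
  rw [natDegree_le_iff_coeff_eq_zero]
  intro j hj
  ext a
  by_contra ha
  have := mem_Lam.1 (hp j a ha)
  omega

lemma SupportedIn.of_C_X_sub_C_mul {c : R} {q : R[X][X]}
    (h : SupportedIn n (d + 1) (C (X - C c) * q)) : SupportedIn n d q := by
  intro j a ha
  have hqj : q.coeff j ≠ 0 := fun h0 => ha (by rw [h0, coeff_zero])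
  have hlead := h j ((q.coeff j).natDegree + 1) <| by
    rw [coeff_C_mul, mul_comm, coeff_mul_X_sub_C,
      coeff_eq_zero_of_natDegree_lt (Nat.lt_succ_self _), zero_mul, sub_zero]
    exact leadingCoeff_ne_zero.2 hqj
  have := le_natDegree_of_ne_zero ha
  rw [mem_Lam] at hlead ⊢
  omega

variable [IsDomain R] [CharZero R]

lemma SupportedIn.map_evalRingHom_eq_zero {k : ℕ} (hp : SupportedIn n k p)
    (h : ∀ ν ∈ PknStar n k, p.evalEval ((ν.1 + ν.2 : ℕ) : R) (2 * ell n ν) = 0) :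
    p.map (evalRingHom (k : R)) = 0 := by
  classical
  refine eq_zero_of_natDegree_lt_card_of_eval_eq_zero' _
    ((PknStar n k).image fun ν => 2 * (ell n ν : R)) ?_ ?_
  · simp only [mem_image, forall_exists_index, and_imp, forall_apply_eq_imp_iff₂]
    intro ν hν
    rw [map_evalRingHom_eval, ← (mem_PknStar.1 hν).2.1]
    exact h ν hν
  · rw [card_image_of_injOn, card_PknStar]
    · exact natDegree_map_le.trans_lt (Nat.lt_succ_of_le hp.natDegree_le)
    · intro ν hν ν' hν' e
      exact ell_injOn_PknStar n k hν hν' (by simpa using e)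

theorem SupportedIn.eq_zero_of_evalEval_eq_zero (hp : SupportedIn n d p)
    (h : ∀ ν ∈ LamStar n d, p.evalEval ((ν.1 + ν.2 : ℕ) : R) (2 * ell n ν) = 0) : p = 0 := by
  induction d generalizing p with
  | zero =>
    have h0 : p.evalEval 0 0 = 0 := by simpa [ell] using h (0, 0) (by simp [mem_LamStar])
    rw [evalEval, C_0, ← coeff_zero_eq_eval_zero, ← coeff_zero_eq_eval_zero] at h0
    ext j a
    by_contra ha
    have := mem_Lam.1 (hp j a ha)
    obtain ⟨rfl, rfl⟩ : j = 0 ∧ a = 0 := by omega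
    exact ha h0
  | succ d ih =>
    obtain ⟨q, rfl⟩ := C_X_sub_C_dvd_of_map_evalRingHom_eq_zero <|
      hp.map_evalRingHom_eq_zero fun ν hν => h ν <| by
        rw [mem_PknStar] at hν; rw [mem_LamStar]; omega
    rw [ih hp.of_C_X_sub_C_mul fun ν hν => ?_, mul_zero]
    have hν' := mem_LamStar.1 hν
    have := h ν (mem_LamStar.2 (by omega))
    rw [evalEval_mul, evalEval_C, eval_sub, eval_X, eval_C] at this
    refine (mul_eq_zero.1 this).resolve_left (sub_ne_zero.2 ?_)
    exact_mod_cast (by omega : ν.1 + ν.2 ≠ d + 1)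

end

section

variable {R ι : Type*} [CommRing R] [Fintype ι] (μ : ι → ℕ × ℕ) (v : ι → R)

noncomputable def rowPoly : R[X][X] :=
  ∑ i, monomial (μ i).2 (monomial ((μ i).1 - (μ i).2) (v i))

lemma evalEval_rowPoly (x y : R) :
    (rowPoly μ v).evalEval x y = ∑ i, v i * x ^ ((μ i).1 - (μ i).2) * y ^ (μ i).2 := by
  simp only [rowPoly, evalEval_finsetSum]
  refine sum_congr rfl fun i _ => ?_
  simp only [evalEval, eval_monomial, ← C_pow, eval_mul, eval_C]

lemma coeff_coeff_rowPoly [DecidableEq ι] (j a : ℕ) : ((rowPoly μ v).coeff j).coeff a =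
    ∑ i with (μ i).2 = j ∧ (μ i).1 - (μ i).2 = a, v i := by
  simp only [rowPoly, finset_sum_coeff, sum_filter]
  refine sum_congr rfl fun i _ => ?_
  by_cases hj : (μ i).2 = j
  · subst hj
    simp [coeff_monomial]
  · simp [coeff_monomial, hj]

lemma supportedIn_rowPoly {n d : ℕ} (hμ : ∀ i, μ i ∈ Lam n d) :
    SupportedIn n d (rowPoly μ v) := by
  classical
  intro j a h
  rw [coeff_coeff_rowPoly] at h
  obtain ⟨i, hi, -⟩ := exists_ne_zero_of_sum_ne_zero h
  rw [mem_filter] at hi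
  have := mem_Lam.1 (hμ i)
  convert hμ i using 1
  ext <;> omega

lemma eq_zero_of_rowPoly_eq_zero (hμ : Function.Injective μ) (hle : ∀ i, (μ i).2 ≤ (μ i).1)
    (h : rowPoly μ v = 0) : v = 0 := by
  classical
  funext i
  have := coeff_coeff_rowPoly μ v (μ i).2 ((μ i).1 - (μ i).2)
  rw [h, coeff_zero, coeff_zero, eq_comm, sum_eq_single_of_mem i (by simp)] at this
  · exact this
  · intro i' hi' hne
    rw [mem_filter] at hi'
    have := hle i; have := hle i'
    exact absurd (hμ (Prod.ext (by omega) hi'.2.1)) hne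

end

section

variable {α : Type*} (r : α → α → Prop) [DecidableRel r] [IsTrans α r] [Std.Antisymm r]
  [Std.Total r] (s : Finset α) (x : α)

lemma getD_sort_mem (i : Fin #s) : (s.sort r).getD i x ∈ s := by
  rw [List.getD_eq_getElem _ _ (by simp), ← mem_sort r]
  exact List.getElem_mem _

lemma getD_sort_injective : Function.Injective fun i : Fin #s => (s.sort r).getD i x := by
  intro i i' h
  simp only [List.getD_eq_getElem _ _ (by simp : ↑i < (s.sort r).length),
    List.getD_eq_getElem _ _ (by simp : ↑i' < (s.sort r).length)] at h
  exact Fin.ext ((sort_nodup s r).getElem_inj_iff.1 h)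

lemma exists_getD_sort_eq {a : α} (ha : a ∈ s) : ∃ i < #s, (s.sort r).getD i x = a := by
  obtain ⟨i, hi, rfl⟩ := List.mem_iff_getElem.1 ((mem_sort r).2 ha)
  exact ⟨i, by simpa using hi, List.getD_eq_getElem _ _ hi⟩

end

/-- For all nonnegative integers `n` and `d`, `det(M_d') ≠ 0`. -/
theorem det_Md'_ne_zero (n d : ℕ) : (Md' n d).det ≠ 0 := by
  rw [Ne, ← Matrix.exists_vecMul_eq_zero_iff]
  rintro ⟨v, hv0, hv⟩
  let μ i := (rowList n d).getD (i : Fin #(Lam n d)) (0, 0)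
  have hμ : ∀ i, μ i ∈ Lam n d := getD_sort_mem rowRel _ _
  refine hv0 <| eq_zero_of_rowPoly_eq_zero μ v (getD_sort_injective rowRel _ _)
    (fun i => (mem_Lam.1 (hμ i)).1) <|
    (supportedIn_rowPoly μ v hμ).eq_zero_of_evalEval_eq_zero fun ν hν => ?_
  obtain ⟨j, hj, hjν⟩ := exists_getD_sort_eq colRel _ (0, 0) hν
  have hcol := congr_fun hv ⟨j, card_LamStar_eq_card_Lam n d ▸ hj⟩
  simp only [Matrix.vecMul, dotProduct, Md', colList, hjν, Pi.zero_apply] at hcol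
  rw [evalEval_rowPoly, ← hcol]
  exact sum_congr rfl fun i _ => by ring

end Capelli
end

section
/- Let μ ∈ Λ_{d,n} and let ν, ν' ∈ Λ*_{d,n} with ν ≠ ν' and |ν| = |ν'|. Then, regarding λ_{μ,ν} − λ_{μ,ν'} as an element of ℚ[x], it is divisible by (x − (ℓ_ν + ℓ_{ν'} − 1)/2); equivalently, the polynomial λ_{μ,ν} − λ_{μ,ν'} vanishes at x = (ℓ_ν + ℓ_{ν'} − 1)/2. -/
open Finset Polynomial

namespace Capelli

/-- Let `μ ∈ Λ_{d,n}` and let `ν, ν' ∈ Λ*_{d,n}` with `ν ≠ ν'` and `|ν| = |ν'|`.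
Then, regarding `λ_{μ,ν} - λ_{μ,ν'}` as an element of `ℚ[x]`, it is divisible by
`(x - (ℓ_ν + ℓ_{ν'} - 1)/2)`; equivalently, the polynomial `λ_{μ,ν} - λ_{μ,ν'}` vanishes at
`x = (ℓ_ν + ℓ_{ν'} - 1)/2`. -/
theorem lamPoly_sub_dvd (n d : ℕ) (μ ν ν' : ℕ × ℕ) (hμ : μ ∈ Lam n d)
    (hν : ν ∈ LamStar n d) (hν' : ν' ∈ LamStar n d) (hne : ν ≠ ν')
    (hsum : ν.1 + ν.2 = ν'.1 + ν'.2) :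
    (X - C (((ell n ν : ℚ) + (ell n ν' : ℚ) - 1) / 2)) ∣
      (lamPoly n μ ν - lamPoly n μ ν').map (Int.castRingHom ℚ) ∧
    ((lamPoly n μ ν - lamPoly n μ ν').map (Int.castRingHom ℚ)).eval
      (((ell n ν : ℚ) + (ell n ν' : ℚ) - 1) / 2) = 0 := by
  set q : ℚ := ((ell n ν : ℚ) + (ell n ν' : ℚ) - 1) / 2 with hq
  have key : ((lamPoly n μ ν - lamPoly n μ ν').map (Int.castRingHom ℚ)).eval q = 0 := by
    simp only [lamPoly, Polynomial.map_sub, Polynomial.map_mul, Polynomial.map_pow,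
      Polynomial.map_add, Polynomial.map_ofNat, Polynomial.map_one, map_C, map_X, eval_one,
      eval_sub, eval_mul, eval_pow, eval_add, eval_C, eval_X, eval_ofNat]
    have h1 : 2 * q + 1 = (ell n ν : ℚ) + (ell n ν' : ℚ) := by rw [hq]; ring
    rw [h1, hsum]
    simp only [eq_intCast]
    push_cast
    ring
  exact ⟨dvd_iff_isRoot.mpr key, key⟩

end Capelli
end

section
/- For every integer s with 0 ≤ s ≤ 2n − 2, the polynomial (x − s/2)^{f(d,s)} divides det(M_d) in ℚ[x] (where det(M_d) is regarded as an element of ℚ[x] via the inclusion ℤ[x] ⊂ ℚ[x]). -/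
/-!
At `x = s/2` the base `(2x+1)ℓ - ℓ²` of `λ_{μ,ν}` equals `ℓ(s+1-ℓ)`, which is symmetric under
`ℓ ↦ s+1-ℓ`; indeed `(2x+1)ℓ - ℓ² - ((2x+1)ℓ' - ℓ'²) = (ℓ-ℓ')(2x-s)` when `ℓ + ℓ' = s+1`.
So the columns of `M_d` labelled by a pair `(ν, ν')` counted by `f(d,s)` agree modulo `x - s/2`.
As `ℓ` is injective on each `ℙ*_{k,n}`, distinct pairs have distinct first members, and no first
member is a second member of another pair; subtracting the second column of each pair from the
first therefore pulls out one factor `x - s/2` per pair.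
-/

open Finset Polynomial

namespace Matrix

theorem pow_card_dvd_det_of_dvd_sub_col {R ι κ : Type*} [CommRing R] [Fintype ι]
    [DecidableEq ι] (A : Matrix ι ι R) (q : R) (S : Finset κ) (a b : κ → ι)
    (ha : Set.InjOn a S) (hab : ∀ k ∈ S, ∀ k' ∈ S, a k ≠ b k')
    (hdvd : ∀ k ∈ S, ∀ i, q ∣ A i (a k) - A i (b k)) : q ^ S.card ∣ A.det := by
  classical
  induction S using Finset.induction_on generalizing A with
  | empty => simp
  | insert k S hk ih =>
    choose w hw using hdvd k (S.mem_insert_self k)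
    have hcol : A.det = q * (A.updateCol (a k) w).det := by
      rw [← det_updateCol_smul,
        ← det_updateCol_add_smul_self A (hab k (by simp) k (by simp)) (-1)]
      congr 2
      ext i
      simp only [Pi.smul_apply, smul_eq_mul, ← hw i]
      ring
    rw [Finset.card_insert_of_notMem hk, pow_succ', hcol]
    refine mul_dvd_mul_left q (ih _ (ha.mono (by simp))
      (fun k₁ h₁ k₂ h₂ => hab k₁ (by simp [h₁]) k₂ (by simp [h₂])) fun k' hk' i => ?_)
    have hak : a k' ≠ a k := fun h => hk (ha (by simp [hk']) (by simp) h ▸ hk')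
    rw [updateCol_ne hak, updateCol_ne (hab k (by simp) k' (by simp [hk'])).symm]
    exact hdvd k' (by simp [hk']) i

end Matrix

namespace Capelli

lemma mem_PknStar_of_mem_LamStar {n d : ℕ} {ν : ℕ × ℕ} (h : ν ∈ LamStar n d) :
    ν ∈ PknStar n (ν.1 + ν.2) := by
  obtain ⟨k, -, hk⟩ := mem_biUnion.mp h
  obtain rfl := (mem_filter.mp hk).2.2.1
  exact hk

lemma card_Pkn_eq_card_PknStar (n k : ℕ) : (Pkn n k).card = (PknStar n k).card := by
  apply card_nbij' (fun μ => (k - (k / 2 - μ.2), k / 2 - μ.2))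
    (fun ν => (k - (k / 2 - ν.2), k / 2 - ν.2)) <;>
  · intro a ha
    simp only [Pkn, PknStar, mem_coe, mem_filter, mem_product, mem_range] at ha ⊢
    first
    | omega
    | ext <;> simp only <;> omega

lemma card_LamStar (n d : ℕ) : (LamStar n d).card = (Lam n d).card := by
  rw [Lam, LamStar, card_biUnion, card_biUnion]
  · exact sum_congr rfl fun k _ => (card_Pkn_eq_card_PknStar n k).symm
  all_goals
    intro x _ y _ hxy
    rw [Function.onFun, disjoint_left]
    intro a ha hb
    simp only [Pkn, PknStar, mem_filter] at ha hb
    omega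

lemma exists_colList_getD_eq (n d : ℕ) :
    ∃ col : ℕ × ℕ → Fin (Lam n d).card,
      ∀ ν ∈ LamStar n d, (colList n d).getD (col ν) (0, 0) = ν := by
  have hlen : (colList n d).length = (Lam n d).card := by
    rw [colList, length_sort, card_LamStar]
  have hzero : ((0, 0) : ℕ × ℕ) ∈ LamStar n d := mem_biUnion.mpr ⟨0, by simp, by simp [PknStar]⟩
  have hne : Nonempty (Fin (Lam n d).card) :=
    ⟨⟨0, hlen ▸ List.length_pos_of_mem ((mem_sort colRel).mpr hzero)⟩⟩
  have h : ∀ ν, ∃ j : Fin (Lam n d).card,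
      ν ∈ LamStar n d → (colList n d).getD j (0, 0) = ν := by
    intro ν
    by_cases hν : ν ∈ LamStar n d
    · obtain ⟨j, hj, hget⟩ := List.mem_iff_getElem.mp ((mem_sort colRel).mpr hν)
      exact ⟨⟨j, hlen ▸ hj⟩, fun _ => (List.getD_eq_getElem _ _ hj).trans hget⟩
    · exact ⟨Classical.arbitrary _, fun h => absurd h hν⟩
  choose col hcol using h
  exact ⟨col, hcol⟩

def colPairs (n d : ℕ) (s : ℤ) : Finset ((ℕ × ℕ) × (ℕ × ℕ)) :=
  ((LamStar n d) ×ˢ (LamStar n d)).filter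
    (fun p => p.1.1 + p.1.2 = p.2.1 + p.2.2 ∧ ell n p.2 < ell n p.1 ∧
      (ell n p.1 : ℤ) + (ell n p.2 : ℤ) - 1 = s)

lemma fds_eq_card_colPairs (n d : ℕ) (s : ℤ) : fds n d s = (colPairs n d s).card := rfl

lemma colPairs_fst_injOn (n d : ℕ) (s : ℤ) :
    Set.InjOn Prod.fst (↑(colPairs n d s) : Set ((ℕ × ℕ) × (ℕ × ℕ))) := by
  intro p hp p' hp' h
  simp only [colPairs, mem_coe, mem_filter, mem_product] at hp hp'
  have h₂ : p.2 ∈ PknStar n (p.1.1 + p.1.2) := hp.2.1 ▸ mem_PknStar_of_mem_LamStar hp.1.2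
  have h₂' : p'.2 ∈ PknStar n (p.1.1 + p.1.2) := by
    rw [h, hp'.2.1]; exact mem_PknStar_of_mem_LamStar hp'.1.2
  have hell : ell n p.2 = ell n p'.2 := by rw [h] at hp; omega
  exact Prod.ext h (ell_injOn_PknStar n _ h₂ h₂' hell)

lemma colPairs_fst_ne_snd {n d : ℕ} {s : ℤ} {p p' : (ℕ × ℕ) × (ℕ × ℕ)}
    (hp : p ∈ colPairs n d s) (hp' : p' ∈ colPairs n d s) : p.1 ≠ p'.2 := by
  intro h
  simp only [colPairs, mem_filter, h] at hp hp'
  omega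

lemma two_X_sub_C_dvd_lamPoly_sub {n : ℕ} {s : ℤ} (μ : ℕ × ℕ) {ν ν' : ℕ × ℕ}
    (hk : ν.1 + ν.2 = ν'.1 + ν'.2) (hs : (ell n ν : ℤ) + ell n ν' - 1 = s) :
    2 * X - C s ∣ lamPoly n μ ν - lamPoly n μ ν' := by
  subst hs
  rw [lamPoly, lamPoly, hk, ← sub_mul]
  refine (dvd_trans ?_ (sub_dvd_pow_sub_pow _ _ μ.2)).mul_right _
  exact ⟨C ((ell n ν : ℤ) - ell n ν'), by simp only [map_sub, map_add, map_pow, map_one]; ring⟩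

lemma X_sub_C_half_dvd_map (s : ℤ) :
    X - C ((s : ℚ) / 2) ∣ (2 * X - C s : ℤ[X]).map (Int.castRingHom ℚ) :=
  ⟨C 2, by
    rw [Polynomial.map_sub, Polynomial.map_mul, Polynomial.map_ofNat, map_X, map_C, eq_intCast,
      sub_mul, ← C_mul, div_mul_cancel₀ _ two_ne_zero, ← C_ofNat, mul_comm]⟩

theorem root_dvd_det_Md_general (n d : ℕ) (s : ℤ) :
    (X - C ((s : ℚ) / 2)) ^ fds n d s ∣ (Md n d).det.map (Int.castRingHom ℚ) := by
  obtain ⟨col, hcol⟩ := exists_colList_getD_eq n d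
  have hMd : ∀ i, ∀ ν ∈ LamStar n d,
      Md n d i (col ν) = lamPoly n ((rowList n d).getD i (0, 0)) ν :=
    fun i ν hν => by rw [Md, hcol ν hν]
  have hmem : ∀ p ∈ colPairs n d s, p.1 ∈ LamStar n d ∧ p.2 ∈ LamStar n d := fun p hp =>
    mem_product.mp (mem_filter.mp hp).1
  have hcol_inj : ∀ {ν ν'}, ν ∈ LamStar n d → ν' ∈ LamStar n d → col ν = col ν' → ν = ν' :=
    fun hν hν' h => by rw [← hcol _ hν, ← hcol _ hν', h]
  rw [fds_eq_card_colPairs, ← coe_mapRingHom, RingHom.map_det]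
  refine Matrix.pow_card_dvd_det_of_dvd_sub_col _ _ _ (col ·.1) (col ·.2) ?_ ?_ ?_
  · exact fun p hp p' hp' h =>
      colPairs_fst_injOn n d s hp hp' (hcol_inj (hmem p hp).1 (hmem p' hp').1 h)
  · exact fun p hp p' hp' h =>
      colPairs_fst_ne_snd hp hp' (hcol_inj (hmem p hp).1 (hmem p' hp').2 h)
  · intro p hp i
    obtain ⟨-, hk, -, hs⟩ := mem_filter.mp hp
    simp only [RingHom.mapMatrix_apply, Matrix.map_apply, hMd i _ (hmem p hp).1,
      hMd i _ (hmem p hp).2, coe_mapRingHom, ← Polynomial.map_sub]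
    exact (X_sub_C_half_dvd_map s).trans
      (Polynomial.map_dvd _ (two_X_sub_C_dvd_lamPoly_sub _ hk hs))

/-- For every integer `s` with `0 ≤ s ≤ 2n - 2`, the polynomial
`(x - s/2)^{f(d,s)}` divides `det(M_d)` in `ℚ[x]`. -/
theorem root_dvd_det_Md (n d : ℕ) (s : ℤ) (hs0 : 0 ≤ s) (hs : s ≤ 2 * (n : ℤ) - 2) :
    (X - C ((s : ℚ) / 2)) ^ fds n d s ∣ (Md n d).det.map (Int.castRingHom ℚ) :=
  root_dvd_det_Md_general n d s

end Capelli
end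

section
/- If 0 ≤ d ≤ 2n+1, then Σ_{μ ∈ Λ_{d,n}} μ₂ = Σ_{t=0}^{d} ⌊t/2⌋(⌊t/2⌋+1)/2. If d ≥ 2n+2, then Σ_{μ ∈ Λ_{d,n}} μ₂ = Σ_{t=0}^{2n+1} ⌊t/2⌋(⌊t/2⌋+1)/2 + (d − 2n − 1) · n(n+1)/2. -/
open Finset Polynomial

namespace Capelli

lemma Pkn_eq_image (n k : ℕ) :
    Pkn n k = (Finset.range (min (k / 2) n + 1)).image (fun i => (k - i, i)) := by
  ext ⟨a, b⟩
  simp only [Pkn, Finset.mem_filter, Finset.mem_product, Finset.mem_range, Finset.mem_image,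
    Prod.mk.injEq]
  constructor
  · rintro ⟨⟨ha, hb⟩, h1, h2, h3⟩
    exact ⟨b, by omega, by omega, rfl⟩
  · rintro ⟨i, hi, h1, h2⟩
    omega

lemma sum_Pkn (n k : ℕ) :
    ∑ μ ∈ Pkn n k, μ.2 = min (k / 2) n * (min (k / 2) n + 1) / 2 := by
  rw [Pkn_eq_image, Finset.sum_image (by intro a _ b _ h; exact (Prod.ext_iff.mp h).2)]
  show ∑ x ∈ Finset.range (min (k / 2) n + 1), x = _
  have h : (∑ x ∈ Finset.range (min (k / 2) n + 1), x) * 2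
      = min (k / 2) n * (min (k / 2) n + 1) := by
    induction (min (k / 2) n) with
    | zero => rfl
    | succ m ih => rw [Finset.sum_range_succ, add_mul, ih]; ring
  omega

lemma sum_Lam (n d : ℕ) :
    ∑ μ ∈ Lam n d, μ.2 =
      ∑ k ∈ Finset.range (d + 1), min (k / 2) n * (min (k / 2) n + 1) / 2 := by
  rw [Lam, Finset.sum_biUnion]
  · exact Finset.sum_congr rfl fun k _ => sum_Pkn n k
  · intro i _ j _ hij
    simp only [Finset.disjoint_left]
    intro μ hi hj
    simp only [Pkn, Finset.mem_filter] at hi hj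
    omega

/-- If `0 ≤ d ≤ 2n+1`, then
`Σ_{μ ∈ Λ_{d,n}} μ₂ = Σ_{t=0}^{d} ⌊t/2⌋(⌊t/2⌋+1)/2`.  If `d ≥ 2n+2`, then
`Σ_{μ ∈ Λ_{d,n}} μ₂ = Σ_{t=0}^{2n+1} ⌊t/2⌋(⌊t/2⌋+1)/2 + (d - 2n - 1) · n(n+1)/2`. -/
theorem sum_mu2_Lam (n d : ℕ) :
    (d ≤ 2 * n + 1 →
      ∑ μ ∈ Lam n d, μ.2 = ∑ t ∈ Finset.range (d + 1), t / 2 * (t / 2 + 1) / 2) ∧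
    (2 * n + 2 ≤ d →
      ∑ μ ∈ Lam n d, μ.2 =
        ∑ t ∈ Finset.range (2 * n + 2), t / 2 * (t / 2 + 1) / 2 +
          (d - 2 * n - 1) * (n * (n + 1) / 2)) := by
  constructor
  · intro hd
    rw [sum_Lam]
    refine Finset.sum_congr rfl fun t ht => ?_
    simp only [Finset.mem_range] at ht
    have : min (t / 2) n = t / 2 := by omega
    rw [this]
  · intro hd
    rw [sum_Lam]
    rw [Finset.range_eq_Ico, ← Finset.sum_Ico_consecutive _ (by omega : 0 ≤ 2 * n + 2)
      (by omega : 2 * n + 2 ≤ d + 1)]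
    congr 1
    · rw [← Finset.range_eq_Ico]
      refine Finset.sum_congr rfl fun t ht => ?_
      simp only [Finset.mem_range] at ht
      have : min (t / 2) n = t / 2 := by omega
      rw [this]
    · have h1 : ∀ t ∈ Finset.Ico (2 * n + 2) (d + 1),
          min (t / 2) n * (min (t / 2) n + 1) / 2 = n * (n + 1) / 2 := by
        intro t ht
        simp only [Finset.mem_Ico] at ht
        have : min (t / 2) n = n := by omega
        rw [this]
      rw [Finset.sum_congr rfl h1, Finset.sum_const, Nat.card_Ico, smul_eq_mul]
      congr 1
      omega

end Capelli
end
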